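/- arXiv:math/0506260 — 2 statements merged into one kernel-verified Lean document; each statement's English description precedes it below -/
import Mathlib

section
/- For fixed k ≥ 1 and every graph G of order n ≥ 2k+1, |μₖ(G)| + |μₖ(Ḡ)| < √(2/k)·n, where μₖ denotes the k-th largest adjacency eigenvalue. -/
/-!
List the adjacency eigenvalues decreasingly. If `μₖ ≥ 0`, the `k` values `μ₁, …, μₖ` are all at
least `μₖ`; if `μₖ < 0`, the `n - k + 1 ≥ k` values `μₖ, …, μₙ` are all at most `μₖ`. Either way
`k μₖ² ≤ ∑ μᵢ² = tr A² = ∑ deg v`. The degrees of a vertex in `G` and in `Ḡ` add up to `n - 1`, so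
`k (μₖ(G)² + μₖ(Ḡ)²) ≤ n (n - 1) < n²`, and `(|x| + |y|)² ≤ 2 (x² + y²)` finishes.
-/

open Matrix SimpleGraph

/-- The eigenvalues of the adjacency matrix of `G`, in descending order:
`graphEig G i` is the `(i+1)`-th largest eigenvalue. -/
noncomputable def graphEig {n : ℕ} (G : SimpleGraph (Fin n)) (i : Fin n) : ℝ :=
  letI := Classical.decRel G.Adj
  letI hH : (G.adjMatrix ℝ).IsHermitian := by rw [Matrix.IsHermitian, conjTranspose_eq_transpose_of_trivial]; exact G.isSymm_adjMatrix
  hH.eigenvalues (Tuple.sort hH.eigenvalues i.rev)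

theorem Matrix.IsHermitian.trace_mul_self_eq_sum_sq {𝕜 ι : Type*} [RCLike 𝕜] [Fintype ι]
    [DecidableEq ι] {A : Matrix ι ι 𝕜} (hA : A.IsHermitian) :
    (A * A).trace = ∑ i, ((hA.eigenvalues i ^ 2 : ℝ) : 𝕜) := by
  conv_lhs => rw [hA.spectral_theorem, ← map_mul, Unitary.conjStarAlgAut_apply, trace_mul_cycle,
    Unitary.coe_star_mul_self, one_mul, diagonal_mul_diagonal, trace_diagonal]
  simp [sq]

theorem Antitone.succ_mul_sq_le_sum_sq {m : ℕ} {g : Fin m → ℝ} (hg : Antitone g) {i : Fin m}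
    (hi : 2 * (i : ℕ) < m) : ((i : ℝ) + 1) * g i ^ 2 ≤ ∑ j, g j ^ 2 := by
  obtain ⟨S, hS, hcard⟩ :
      ∃ S : Finset (Fin m), (∀ j ∈ S, g i ^ 2 ≤ g j ^ 2) ∧ (i : ℕ) + 1 ≤ S.card := by
    rcases le_or_gt 0 (g i) with hpos | hneg
    · refine ⟨Finset.Iic i, fun j hj => ?_, (Fin.card_Iic i).ge⟩
      have := hg (Finset.mem_Iic.mp hj)
      nlinarith
    · refine ⟨Finset.Ici i, fun j hj => ?_, by rw [Fin.card_Ici]; omega⟩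
      have := hg (Finset.mem_Ici.mp hj)
      nlinarith
  calc ((i : ℝ) + 1) * g i ^ 2 ≤ S.card * g i ^ 2 := by gcongr; exact_mod_cast hcard
    _ ≤ ∑ j ∈ S, g j ^ 2 := by simpa using Finset.card_nsmul_le_sum S _ _ hS
    _ ≤ ∑ j, g j ^ 2 :=
      Finset.sum_le_sum_of_subset_of_nonneg (Finset.subset_univ S) fun j _ _ => sq_nonneg (g j)

namespace SimpleGraph

variable {V : Type*} [Fintype V]

theorem trace_adjMatrix_mul_self {α : Type*} [NonAssocSemiring α] (G : SimpleGraph V)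
    [DecidableRel G.Adj] : (G.adjMatrix α * G.adjMatrix α).trace = ∑ v, (G.degree v : α) := by
  simp only [trace, diag, adjMatrix_mul_self_apply_self]

theorem degree_add_degree_compl [DecidableEq V] (G : SimpleGraph V) [DecidableRel G.Adj]
    (v : V) : G.degree v + Gᶜ.degree v = Fintype.card V - 1 := by
  have := G.degree_lt_card_verts v
  rw [degree_compl]
  omega

end SimpleGraph

theorem graphEig_eq {n : ℕ} (G : SimpleGraph (Fin n)) [DecidableRel G.Adj] (i : Fin n) :
    graphEig G i = (G.isHermitian_adjMatrix ℝ).eigenvalues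
      (Tuple.sort (G.isHermitian_adjMatrix ℝ).eigenvalues i.rev) := by
  obtain rfl : ‹DecidableRel G.Adj› = Classical.decRel G.Adj := Subsingleton.elim _ _
  rfl

theorem graphEig_antitone {n : ℕ} (G : SimpleGraph (Fin n)) : Antitone (graphEig G) :=
  fun _ _ hij => Tuple.monotone_sort _ (Fin.rev_le_rev.mpr hij)

theorem sum_graphEig_sq {n : ℕ} (G : SimpleGraph (Fin n)) [DecidableRel G.Adj] :
    ∑ i, graphEig G i ^ 2 = ∑ v, (G.degree v : ℝ) := by
  have hA := G.isHermitian_adjMatrix ℝ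
  calc ∑ i, graphEig G i ^ 2 = ∑ i, hA.eigenvalues i ^ 2 := by
        simp only [graphEig_eq]
        exact Equiv.sum_comp (Fin.revPerm.trans (Tuple.sort hA.eigenvalues)) (hA.eigenvalues · ^ 2)
    _ = ∑ v, (G.degree v : ℝ) := by
      simpa using hA.trace_mul_self_eq_sum_sq.symm.trans G.trace_adjMatrix_mul_self

theorem sum_graphEig_sq_add_sum_graphEig_compl_sq {n : ℕ} (G : SimpleGraph (Fin n)) :
    ∑ i, graphEig G i ^ 2 + ∑ i, graphEig Gᶜ i ^ 2 = n * (n - 1 : ℝ) := by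
  classical
  have hcast : ∀ v : Fin n, ((n - 1 : ℕ) : ℝ) = n - 1 := fun v => by
    rw [Nat.cast_sub (by have := v.pos; omega), Nat.cast_one]
  simp only [sum_graphEig_sq, ← Finset.sum_add_distrib, ← Nat.cast_add, degree_add_degree_compl,
    Fintype.card_fin]
  rw [Finset.sum_congr rfl fun v _ => hcast v, Finset.sum_const, Finset.card_univ, Fintype.card_fin,
    nsmul_eq_mul]

theorem stmt14 (k n : ℕ) (hk : 1 ≤ k) (hn : 2 * k + 1 ≤ n) (G : SimpleGraph (Fin n)) :
    |graphEig G ⟨k - 1, by omega⟩| + |graphEig Gᶜ ⟨k - 1, by omega⟩| <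
      Real.sqrt (2 / k) * n := by
  set i : Fin n := ⟨k - 1, by omega⟩
  have hik : ((i : ℕ) : ℝ) + 1 = k := by simp [i, Nat.cast_sub hk]
  have hi : 2 * (i : ℕ) < n := by simp only [i]; omega
  have hG := (graphEig_antitone G).succ_mul_sq_le_sum_sq hi
  have hGc := (graphEig_antitone Gᶜ).succ_mul_sq_le_sum_sq hi
  have hsum := sum_graphEig_sq_add_sum_graphEig_compl_sq G
  rw [hik] at hG hGc
  set a := graphEig G i
  set b := graphEig Gᶜ i
  have hk0 : (0 : ℝ) < k := by exact_mod_cast hk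
  have hn0 : (0 : ℝ) < n := by exact_mod_cast (by omega : 0 < n)
  have hab : (|a| + |b|) ^ 2 ≤ 2 * (a ^ 2 + b ^ 2) := by
    nlinarith [sq_nonneg (|a| - |b|), sq_abs a, sq_abs b]
  have hk_sq : k * (|a| + |b|) ^ 2 < 2 * n ^ 2 := by
    nlinarith [mul_le_mul_of_nonneg_left hab hk0.le]
  rw [← Real.sqrt_sq (Nat.cast_nonneg n), ← Real.sqrt_mul (by positivity),
    Real.lt_sqrt (by positivity), div_mul_eq_mul_div, lt_div_iff₀ hk0]
  linarith
end

section
/- For every n ≥ 4 there exists a graph G of order n with μₙ(G) + μₙ(Ḡ) < −(√2/2)·n + 3, i.e., |μₙ(G)| + |μₙ(Ḡ)| > (√2/2)·n − 3, where μₙ denotes the smallest adjacency eigenvalue. -/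
open Matrix SimpleGraph

/-! The smallest eigenvalues of `G(n)` and of its complement are both at most
`-√2 m - (2 - √2)/4`, where `m = ⌊n/4⌋`. This is the Rayleigh-quotient bound for a test vector
that is constant on each of the classes `A, B, C, D` and vanishes on the `n mod 4` leftover
vertices, which are isolated in `G(n)`. On such vectors the quadratic form of the adjacency matrix
is `m²` times that of the `4 × 4` class pattern minus `m` times its diagonal, and the test vectors
are eigenvectors of the two class patterns for their eigenvalue `-√2`. Adding the two bounds and
using `n ≤ 4m + 3` gives the claim, with room to spare since `√2 < 2`. -/

open Finset

open scoped MatrixOrder in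
theorem Matrix.IsHermitian.mul_dotProduct_le {ι : Type*} [Fintype ι] [DecidableEq ι]
    {A : Matrix ι ι ℝ} (hA : A.IsHermitian) {r : ℝ} (hr : ∀ i, r ≤ hA.eigenvalues i)
    (x : ι → ℝ) : r * (x ⬝ᵥ x) ≤ x ⬝ᵥ (A *ᵥ x) := by
  have hle : algebraMap ℝ _ r ≤ A := by
    rw [algebraMap_le_iff_le_spectrum hA.isSelfAdjoint, hA.spectrum_real_eq_range_eigenvalues]
    rintro _ ⟨i, rfl⟩
    exact hr i
  simpa [sub_mulVec, Algebra.algebraMap_eq_smul_one, smul_mulVec, dotProduct_smul] using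
    (Matrix.le_iff.mp hle).dotProduct_mulVec_nonneg x

theorem Tuple.apply_sort_zero_le {α : Type*} [LinearOrder α] {n : ℕ} (f : Fin (n + 1) → α)
    (i : Fin (n + 1)) :
    f (Tuple.sort f 0) ≤ f i := by
  simpa using Tuple.monotone_sort f (Fin.zero_le ((Tuple.sort f)⁻¹ i))

theorem graphEig_last_le_of_dotProduct_le {n : ℕ} (hn : 0 < n) (G : SimpleGraph (Fin n))
    [DecidableRel G.Adj] {x : Fin n → ℝ} (hx : x ≠ 0) {r : ℝ}
    (h : x ⬝ᵥ (G.adjMatrix ℝ *ᵥ x) ≤ r * (x ⬝ᵥ x)) :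
    graphEig G ⟨n - 1, by omega⟩ ≤ r := by
  obtain ⟨n, rfl⟩ : ∃ k, n = k + 1 := ⟨n - 1, by omega⟩
  obtain rfl : ‹DecidableRel G.Adj› = Classical.decRel G.Adj := Subsingleton.elim _ _
  let _ : DecidableRel G.Adj := Classical.decRel G.Adj
  have hrev : Fin.rev ⟨n + 1 - 1, by omega⟩ = (0 : Fin (n + 1)) := by ext; simp
  refine le_of_mul_le_mul_right ?_ (by simpa using dotProduct_star_self_pos_iff.mpr hx)
  refine le_trans ((G.isHermitian_adjMatrix ℝ).mul_dotProduct_le (fun i => ?_) x) h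
  unfold graphEig
  rw [hrev]
  exact Tuple.apply_sort_zero_le _ i

section Blowup

variable {V ι R : Type*} [Fintype V] [Fintype ι] [DecidableEq ι] {c : V → ι} {m : ℕ}

theorem sum_comp_eq_mul_sum [NonAssocSemiring R] {g : ι → R}
    (hc : ∀ p, g p ≠ 0 → #{v | c v = p} = m) :
    ∑ v, g (c v) = m * ∑ p, g p := by
  rw [← sum_fiberwise univ c, mul_sum]
  refine sum_congr rfl fun p _ => ?_
  rw [sum_congr rfl fun v hv => by rw [(mem_filter.mp hv).2], sum_const, nsmul_eq_mul]
  by_cases hp : g p = 0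
  · simp [hp]
  · rw [hc p hp]

theorem dotProduct_comp_self [Semiring R] {f : ι → R}
    (hc : ∀ p, f p ≠ 0 → #{v | c v = p} = m) :
    (f ∘ c) ⬝ᵥ (f ∘ c) = m * ∑ p, f p ^ 2 := by
  simp only [dotProduct, Function.comp_apply, ← sq]
  exact sum_comp_eq_mul_sum (g := fun p => f p ^ 2) fun p hp => hc p fun h => hp (by simp [h])

theorem dotProduct_adjMatrix_mulVec_comp [CommRing R] {f : ι → R} [DecidableEq V]
    (G : SimpleGraph V) [DecidableRel G.Adj] {P : ι → ι → Prop} [DecidableRel P]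
    (hG : ∀ u v, G.Adj u v ↔ u ≠ v ∧ P (c u) (c v))
    (hc : ∀ p, f p ≠ 0 → #{v | c v = p} = m) :
    (f ∘ c) ⬝ᵥ (G.adjMatrix R *ᵥ (f ∘ c)) =
      m ^ 2 * ∑ p, ∑ q, (if P p q then f p * f q else 0) -
        m * ∑ p, (if P p p then f p ^ 2 else 0) := by
  have hrow (u : V) : (G.adjMatrix R *ᵥ (f ∘ c)) u =
      m * ∑ q, (if P (c u) q then f q else 0) - if P (c u) (c u) then f (c u) else 0 := by
    have hentry (v : V) : G.adjMatrix R u v * f (c v) =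
        (if P (c u) (c v) then f (c v) else 0) -
          if u = v then (if P (c u) (c u) then f (c u) else 0) else 0 := by
      by_cases huv : u = v
      · subst huv; simp
      · simp [hG, huv]
    simp only [mulVec, dotProduct, Function.comp_apply, hentry, sum_sub_distrib, sum_ite_eq,
      mem_univ, if_true]
    rw [sum_comp_eq_mul_sum (g := fun q => if P (c u) q then f q else 0)
      fun q hq => hc q fun h => by simp [h] at hq]
  simp only [dotProduct, hrow, Function.comp_apply]
  rw [sum_comp_eq_mul_sum (g := fun p => f p * (m * ∑ q, (if P p q then f q else 0) -
      if P p p then f p else 0)) fun p hp => hc p fun h => by simp [h] at hp]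
  simp only [mul_sub, mul_sum, sum_sub_distrib]
  congr 1 <;> refine sum_congr rfl fun p _ => ?_
  · refine sum_congr rfl fun q _ => ?_
    split_ifs <;> ring
  · split_ifs <;> ring

end Blowup

-- Classes `0, 1, 2, 3` are `A, B, C, D`; class `4` holds the `n mod 4` leftover vertices.
def blockIndex (m : ℕ) {n : ℕ} (i : Fin n) : Fin 5 := ⟨min (i / m) 4, by omega⟩

theorem card_blockIndex_eq {m n : ℕ} (hm : 0 < m) (hmn : 4 * m ≤ n) {p : Fin 5} (hp : p ≠ 4) :
    #{i : Fin n | blockIndex m i = p} = m := by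
  have hp4 : (p : ℕ) < 4 := by omega
  have hmem (k : ℕ) : min (k / m) 4 = p ↔ p * m ≤ k ∧ k < p * m + m := by
    rw [show min (k / m) 4 = p ↔ k / m = p by omega, Nat.div_eq_iff hm]; omega
  have hval : ({i : Fin n | blockIndex m i = p} : Finset _).map Fin.valEmbedding =
      Ico (p * m) (p * m + m) := by
    ext k
    simp only [mem_map, mem_filter, mem_univ, true_and, Fin.valEmbedding_apply, mem_Ico,
      blockIndex, Fin.ext_iff, hmem]
    constructor
    · rintro ⟨i, hi, rfl⟩; exact hi
    · intro hk; exact ⟨⟨k, by nlinarith⟩, hk, rfl⟩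
  rw [← card_map, hval, Nat.card_Ico]; omega

theorem graphEig_last_le_of_blockIndex {m n : ℕ} (hm : 0 < m) (hmn : 4 * m ≤ n)
    (G : SimpleGraph (Fin n)) [DecidableRel G.Adj] {P : Fin 5 → Fin 5 → Prop} [DecidableRel P]
    (hG : ∀ u v, G.Adj u v ↔ u ≠ v ∧ P (blockIndex m u) (blockIndex m v))
    {f : Fin 5 → ℝ} (hf0 : f 0 ≠ 0) (hf4 : f 4 = 0) {r : ℝ}
    (h : m * ∑ p, ∑ q, (if P p q then f p * f q else 0) -
      ∑ p, (if P p p then f p ^ 2 else 0) = r * ∑ p, f p ^ 2) :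
    graphEig G ⟨n - 1, by omega⟩ ≤ r := by
  have hc (p : Fin 5) (hp : f p ≠ 0) : #{i : Fin n | blockIndex m i = p} = m :=
    card_blockIndex_eq hm hmn (by rintro rfl; exact hp hf4)
  refine graphEig_last_le_of_dotProduct_le (by omega) G (x := f ∘ blockIndex m) ?_ ?_
  · intro hx
    exact hf0 (by simpa [blockIndex] using congrFun hx ⟨0, by omega⟩)
  · rw [dotProduct_adjMatrix_mulVec_comp G hG hc, dotProduct_comp_self hc]
    linear_combination (m : ℝ) * h

def witnessEdges : Finset (Sym2 (Fin 5)) := {s(0, 0), s(3, 3), s(0, 1), s(1, 2), s(2, 3)}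

def witnessGraph (n : ℕ) : SimpleGraph (Fin n) :=
  SimpleGraph.fromRel fun u v => s(blockIndex (n / 4) u, blockIndex (n / 4) v) ∈ witnessEdges

theorem witnessGraph_adj {n : ℕ} (u v : Fin n) :
    (witnessGraph n).Adj u v ↔
      u ≠ v ∧ s(blockIndex (n / 4) u, blockIndex (n / 4) v) ∈ witnessEdges := by
  rw [witnessGraph, fromRel_adj, Sym2.eq_swap, or_self]

theorem compl_witnessGraph_adj {n : ℕ} (u v : Fin n) :
    (witnessGraph n)ᶜ.Adj u v ↔
      u ≠ v ∧ s(blockIndex (n / 4) u, blockIndex (n / 4) v) ∉ witnessEdges := by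
  rw [compl_adj, witnessGraph_adj]
  tauto

theorem graphEig_witnessGraph_last_le {n : ℕ} (hn : 4 ≤ n) :
    graphEig (witnessGraph n) ⟨n - 1, Nat.sub_one_lt_of_lt hn⟩ ≤
      -√2 * (n / 4 : ℕ) - (2 - √2) / 4 := by
  classical
  have hs : √2 ^ 2 = 2 := Real.sq_sqrt (by norm_num)
  refine graphEig_last_le_of_blockIndex (m := n / 4) (P := fun p q => s(p, q) ∈ witnessEdges)
    (by omega) (by omega) _ witnessGraph_adj
    (f := ![1, -(1 + √2), 1 + √2, -1, 0]) (by simp) (by simp) ?_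
  simp [Fin.sum_univ_five, witnessEdges]
  linear_combination (2 * (n / 4 : ℕ) * √2 + 2 * (n / 4 : ℕ) - √2 / 2) * hs

theorem graphEig_compl_witnessGraph_last_le {n : ℕ} (hn : 4 ≤ n) :
    graphEig (witnessGraph n)ᶜ ⟨n - 1, Nat.sub_one_lt_of_lt hn⟩ ≤
      -√2 * (n / 4 : ℕ) - (2 - √2) / 4 := by
  classical
  have hs : √2 ^ 2 = 2 := Real.sq_sqrt (by norm_num)
  refine graphEig_last_le_of_blockIndex (m := n / 4) (P := fun p q => s(p, q) ∉ witnessEdges)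
    (by omega) (by omega) _ compl_witnessGraph_adj
    (f := ![1, √2 - 1, 1 - √2, -1, 0]) (by simp) (by simp) ?_
  simp [Fin.sum_univ_five, witnessEdges]
  linear_combination (2 * (n / 4 : ℕ) * √2 - 2 * (n / 4 : ℕ) - √2 / 2) * hs

theorem stmt18 (n : ℕ) (hn : 4 ≤ n) :
    ∃ G : SimpleGraph (Fin n),
      graphEig G ⟨n - 1, by omega⟩ + graphEig Gᶜ ⟨n - 1, by omega⟩ <
        -(Real.sqrt 2 / 2) * n + 3 := by
  refine ⟨witnessGraph n, ?_⟩
  have hG := graphEig_witnessGraph_last_le hn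
  have hGc := graphEig_compl_witnessGraph_last_le hn
  have hsqrt : √2 < 2 := by
    rw [Real.sqrt_lt' (by norm_num)]; norm_num
  have hn4 : (n : ℝ) ≤ 4 * (n / 4 : ℕ) + 3 := by
    exact_mod_cast (by omega : n ≤ 4 * (n / 4) + 3)
  have := mul_le_mul_of_nonneg_left hn4 (Real.sqrt_nonneg 2)
  linarith
end
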